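/- arXiv:2107.02085 — 2 statements merged into one kernel-verified Lean document; each statement's English description precedes it below -/
import Mathlib

section
/- Let t ∈ ℝ^{n+1} be one of the rows t_1,...,t_n forming S = Σ_{k=1}^n t_k t_k^T, and let c > 0. Then t^T (S + cI)^{-2} t is bounded above by a constant depending only on t_1,...,t_n (uniformly in c > 0). -/
/-!
Write `S = Tᵀ T` with `T` the matrix of rows `t k`. Since `range (Tᵀ T) = range Tᵀ`
(equal ranks), `t i = S y` for some `y`. With `A = S + c I` and `w = A⁻¹ y`, commuting `S`
past `A⁻¹` gives `A⁻¹ t i = S w`, while `y = S w + c w` gives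
`‖y‖² = ‖S w‖² + 2c ⟪w, S w⟫ + c² ‖w‖² ≥ ‖S w‖²`.
Hence `t iᵀ A⁻² t i = ‖A⁻¹ t i‖² ≤ ‖y‖²` for every `c > 0`.
-/

open Matrix

namespace Matrix

variable {m n : Type*}

theorem transpose_mul_self_eq_sum_vecMulVec [Fintype m] {R : Type*} [CommSemiring R]
    (A : Matrix m n R) :
    Aᵀ * A = ∑ k, vecMulVec (A k) (A k) := by
  ext a b
  simp [mul_apply, vecMulVec_apply, Matrix.sum_apply]

theorem range_mulVecLin_transpose_mul_self [Fintype m] [Fintype n] {R : Type*} [Field R]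
    [LinearOrder R] [IsStrictOrderedRing R] (A : Matrix m n R) :
    LinearMap.range (Aᵀ * A).mulVecLin = LinearMap.range Aᵀ.mulVecLin := by
  refine Submodule.eq_of_le_of_finrank_eq ?_ ?_
  · rw [mulVecLin_mul]
    exact LinearMap.range_comp_le_range _ _
  · change (Aᵀ * A).rank = Aᵀ.rank
    rw [rank_transpose_mul_self, rank_transpose]

variable [Fintype n] [DecidableEq n]

theorem _root_.Commute.nonsing_inv_right {α : Type*} [CommRing α] {S A : Matrix n n α}
    (h : Commute S A) (hA : IsUnit A.det) : Commute S A⁻¹ := calc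
  S * A⁻¹ = A⁻¹ * (A * S) * A⁻¹ := by
    rw [← Matrix.mul_assoc, nonsing_inv_mul A hA, Matrix.one_mul]
  _ = A⁻¹ * S := by
    rw [← h.eq, Matrix.mul_assoc, Matrix.mul_assoc, mul_nonsing_inv A hA, Matrix.mul_one]

theorem PosSemidef.dotProduct_mulVec_inv_add_smul_one_sq_le {S : Matrix n n ℝ}
    (hS : S.PosSemidef) {c : ℝ} (hc : 0 < c) (y : n → ℝ) :
    S *ᵥ y ⬝ᵥ ((S + c • 1)⁻¹ * (S + c • 1)⁻¹) *ᵥ (S *ᵥ y) ≤ y ⬝ᵥ y := by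
  set A := S + c • (1 : Matrix n n ℝ)
  have hA : IsUnit A.det :=
    (isUnit_iff_isUnit_det A).mp (PosDef.posSemidef_add hS (PosDef.one.smul hc)).isUnit
  have hSsymm : Sᵀ = S := by
    simpa [conjTranspose_eq_transpose_of_trivial] using hS.isHermitian.eq
  have hAinv_symm : A⁻¹ᵀ = A⁻¹ := by
    rw [transpose_nonsing_inv, transpose_add, hSsymm, transpose_smul, transpose_one]
  have hcomm : A⁻¹ * S = S * A⁻¹ :=
    (((Commute.refl S).add_right ((Commute.one_right S).smul_right c)).nonsing_inv_right hA).eq.symm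
  set w := A⁻¹ *ᵥ y
  have hx : A⁻¹ *ᵥ (S *ᵥ y) = S *ᵥ w := by
    rw [mulVec_mulVec, hcomm, ← mulVec_mulVec]
  have hy : y = S *ᵥ w + c • w := calc
    y = A *ᵥ w := by rw [mulVec_mulVec, mul_nonsing_inv A hA, one_mulVec]
    _ = S *ᵥ w + c • w := by rw [add_mulVec, smul_mulVec, one_mulVec]
  rw [← mulVec_mulVec, dotProduct_mulVec, ← hAinv_symm, vecMul_transpose, hAinv_symm, hx]
  have hw : 0 ≤ w ⬝ᵥ S *ᵥ w := hS.dotProduct_mulVec_nonneg w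
  have hww : 0 ≤ w ⬝ᵥ w := dotProduct_self_star_nonneg w
  conv_rhs => rw [hy]
  simp only [add_dotProduct, dotProduct_add, smul_dotProduct, dotProduct_smul, smul_eq_mul]
  rw [dotProduct_comm (S *ᵥ w) w]
  nlinarith [mul_nonneg hc.le hw, mul_nonneg (mul_nonneg hc.le hc.le) hww]

end Matrix

theorem diag_quadratic_form_uniformly_bounded (n : ℕ)
    (t : Fin n → (Fin (n + 1) → ℝ)) (i : Fin n) :
    ∃ Q : ℝ, ∀ c : ℝ, 0 < c →
      t i ⬝ᵥ (((∑ k, vecMulVec (t k) (t k)) + c • (1 : Matrix (Fin (n + 1)) (Fin (n + 1)) ℝ))⁻¹ *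
          ((∑ k, vecMulVec (t k) (t k)) + c • (1 : Matrix (Fin (n + 1)) (Fin (n + 1)) ℝ))⁻¹).mulVec (t i)
        ≤ Q := by
  set T : Matrix (Fin n) (Fin (n + 1)) ℝ := Matrix.of t
  have hS : ∑ k, vecMulVec (t k) (t k) = Tᵀ * T := (transpose_mul_self_eq_sum_vecMulVec T).symm
  obtain ⟨y, hy⟩ : t i ∈ LinearMap.range (Tᵀ * T).mulVecLin := by
    rw [range_mulVecLin_transpose_mul_self]
    exact ⟨Pi.single i 1, by simp [T]⟩
  refine ⟨y ⬝ᵥ y, fun c hc => ?_⟩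
  rw [hS, ← hy]
  exact (posSemidef_conjTranspose_mul_self T).dotProduct_mulVec_inv_add_smul_one_sq_le hc y
end

section
/- Let M be a symmetric positive semidefinite (n+1)×(n+1) real matrix, and let ξ > 0, λ > 0. Then (Mξ + λI)^{-1} ≤ ξ^{-1} M^+ + λ^{-1}(I − P_M) in the Loewner order, where M^+ is the Moore–Penrose pseudoinverse of M and P_M is the orthogonal projection onto the column space of M. -/
/-!
Write `A = ξ • M + λ • 1` and `B = ξ⁻¹ • M⁺ + λ⁻¹ • (1 - P)`. For symmetric `M`, the transpose of
`M⁺` satisfies the Penrose equations as well, so uniqueness of the pseudoinverse makes `M⁺`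
symmetric and hence commuting with `M`; and `P = M M⁺`, both being orthogonal projections with the
range of `M`. Then `A B = 1 + (λ / ξ) • M⁺`, so `A B A - A = λ • M M⁺ + (λ² / ξ) • M⁺` is positive
semidefinite, and congruence by `A⁻¹` turns this into `A⁻¹ ≤ B`.
-/

structure IsMoorePenroseInverse {R : Type*} [Mul R] [Star R] (a x : R) : Prop where
  self_mul_mul_self : a * x * a = a
  mul_self_mul : x * a * x = x
  isSelfAdjoint_self_mul : IsSelfAdjoint (a * x)
  isSelfAdjoint_mul_self : IsSelfAdjoint (x * a)

namespace IsMoorePenroseInverse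

variable {R : Type*} [Semigroup R] [StarMul R] {a x y : R}

theorem unique (hx : IsMoorePenroseInverse a x) (hy : IsMoorePenroseInverse a y) : x = y := by
  have hxa := hx.isSelfAdjoint_mul_self.star_eq
  have hax := hx.isSelfAdjoint_self_mul.star_eq
  have hya := hy.isSelfAdjoint_mul_self.star_eq
  have hay := hy.isSelfAdjoint_self_mul.star_eq
  have left : x = x * a * y := calc
    x = x * star (a * x) := by rw [hax, ← mul_assoc, hx.mul_self_mul]
    _ = x * star (a * y * (a * x)) := by rw [← mul_assoc (a * y) a x, hy.self_mul_mul_self]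
    _ = x * a * x * a * y := by rw [star_mul, hax, hay]; simp only [mul_assoc]
    _ = x * a * y := by rw [hx.mul_self_mul]
  have right : y = x * a * y := calc
    y = star (y * a) * y := by rw [hya, hy.mul_self_mul]
    _ = star (y * a * (x * a)) * y := by
      rw [mul_assoc y a, ← mul_assoc a x a, hx.self_mul_mul_self]
    _ = x * a * (y * a * y) := by rw [star_mul, hxa, hya]; simp only [mul_assoc]
    _ = x * a * y := by rw [hy.mul_self_mul]
  rw [left, ← right]

theorem star (h : IsMoorePenroseInverse a x) : IsMoorePenroseInverse (star a) (star x) where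
  self_mul_mul_self := by rw [← star_mul, ← star_mul, ← mul_assoc, h.self_mul_mul_self]
  mul_self_mul := by rw [← star_mul, ← star_mul, ← mul_assoc, h.mul_self_mul]
  isSelfAdjoint_self_mul := by
    rw [← star_mul]
    exact IsSelfAdjoint.star_iff.2 h.isSelfAdjoint_mul_self
  isSelfAdjoint_mul_self := by
    rw [← star_mul]
    exact IsSelfAdjoint.star_iff.2 h.isSelfAdjoint_self_mul

theorem isSelfAdjoint (ha : IsSelfAdjoint a) (h : IsMoorePenroseInverse a x) :
    IsSelfAdjoint x := by
  have hstar := h.star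
  rw [ha.star_eq] at hstar
  exact (h.unique hstar).symm

theorem commute (ha : IsSelfAdjoint a) (h : IsMoorePenroseInverse a x) : Commute a x := by
  have hxa := h.isSelfAdjoint_mul_self.star_eq
  rwa [star_mul, ha.star_eq, (h.isSelfAdjoint ha).star_eq] at hxa

theorem isStarProjection_self_mul (h : IsMoorePenroseInverse a x) :
    IsStarProjection (a * x) where
  isIdempotentElem := by rw [IsIdempotentElem, ← mul_assoc, h.self_mul_mul_self]
  isSelfAdjoint := h.isSelfAdjoint_self_mul

end IsMoorePenroseInverse

theorem IsStarProjection.eq_of_mul_eq {R : Type*} [Mul R] [StarMul R] {p q : R}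
    (hp : IsStarProjection p) (hq : IsStarProjection q) (hpq : p * q = q) (hqp : q * p = p) :
    p = q := by
  rw [← hqp, ← hp.isSelfAdjoint.star_eq, ← hq.isSelfAdjoint.star_eq, ← star_mul, hpq,
    hq.isSelfAdjoint.star_eq]

section ShiftedScaling

variable {K R : Type*} [Field K] [Ring R] [Algebra K R] {a x : R} {ξ c : K}

theorem smul_add_smul_one_mul_eq_one_add_smul (h : a * x * a = a) (hax : Commute a x)
    (hξ : ξ ≠ 0) (hc : c ≠ 0) :
    (ξ • a + c • 1) * (ξ⁻¹ • x + c⁻¹ • (1 - a * x)) = 1 + (c / ξ) • x := by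
  have haax : a * a * x = a := by rw [mul_assoc, hax.eq, ← mul_assoc, h]
  simp only [add_mul, mul_add, mul_sub, one_mul, mul_one, smul_mul_assoc, mul_smul_comm,
    ← mul_assoc, haax]
  match_scalars <;> field_simp <;> ring

theorem smul_add_smul_one_mul_mul_sub_eq (h : a * x * a = a) (hax : Commute a x)
    (hξ : ξ ≠ 0) (hc : c ≠ 0) :
    (ξ • a + c • 1) * (ξ⁻¹ • x + c⁻¹ • (1 - a * x)) * (ξ • a + c • 1) - (ξ • a + c • 1) =
      c • (a * x) + (c ^ 2 / ξ) • x := by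
  rw [smul_add_smul_one_mul_eq_one_add_smul h hax hξ hc]
  simp only [add_mul, mul_add, one_mul, mul_one, smul_mul_assoc, mul_smul_comm, hax.eq]
  match_scalars <;> field_simp <;> ring

end ShiftedScaling

namespace Matrix

variable {n R : Type*} [Fintype n]

theorem mul_eq_right_of_range_le [CommSemiring R] {m : Type*} [Fintype m] {P : Matrix n n R}
    {Q : Matrix n m R} (hP : IsIdempotentElem P)
    (h : LinearMap.range Q.mulVecLin ≤ LinearMap.range P.mulVecLin) : P * Q = Q := by
  have hP' : IsIdempotentElem P.mulVecLin := by
    rw [IsIdempotentElem, Module.End.mul_eq_comp, ← mulVecLin_mul, hP.eq]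
  have hcomp : (P * Q).mulVecLin = Q.mulVecLin := by
    rw [mulVecLin_mul]
    exact (LinearMap.IsIdempotentElem.comp_eq_right_iff hP' _).2 h
  exact mulVec_injective (congrArg DFunLike.coe hcomp)

theorem range_mulVecLin_mul_eq_of_mul_mul_eq [CommSemiring R] {A B : Matrix n n R}
    (h : A * B * A = A) : LinearMap.range (A * B).mulVecLin = LinearMap.range A.mulVecLin := by
  refine le_antisymm ?_ ?_
  · rw [mulVecLin_mul]
    exact LinearMap.range_comp_le_range _ _
  · conv_lhs => rw [← h, mulVecLin_mul]
    exact LinearMap.range_comp_le_range _ _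

theorem _root_.IsStarProjection.eq_of_range_mulVecLin_eq [CommSemiring R] [StarRing R]
    {P Q : Matrix n n R} (hP : IsStarProjection P) (hQ : IsStarProjection Q)
    (h : LinearMap.range P.mulVecLin = LinearMap.range Q.mulVecLin) : P = Q :=
  hP.eq_of_mul_eq hQ (mul_eq_right_of_range_le hP.isIdempotentElem h.ge)
    (mul_eq_right_of_range_le hQ.isIdempotentElem h.le)

theorem IsHermitian.posSemidef_sub_inv_iff [DecidableEq n] [CommRing R] [PartialOrder R]
    [StarRing R] {A B : Matrix n n R} (hA : A.IsHermitian) (hU : IsUnit A) :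
    (B - A⁻¹).PosSemidef ↔ (A * B * A - A).PosSemidef := by
  have hdet : IsUnit A.det := (isUnit_iff_isUnit_det A).1 hU
  rw [← IsUnit.posSemidef_star_left_conjugate_iff hU, star_eq_conjTranspose, hA.eq, mul_sub,
    sub_mul, mul_nonsing_inv A hdet, one_mul]

theorem _root_.IsStarProjection.posSemidef [Ring R] [PartialOrder R] [StarRing R]
    [StarOrderedRing R] {P : Matrix n n R} (hP : IsStarProjection P) : P.PosSemidef := by
  have hPP : Pᴴ * P = P := by
    rw [← star_eq_conjTranspose, hP.isSelfAdjoint.star_eq, hP.isIdempotentElem.eq]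
  exact hPP ▸ posSemidef_conjTranspose_mul_self P

theorem _root_.IsMoorePenroseInverse.posSemidef [Ring R] [PartialOrder R] [StarRing R]
    {A X : Matrix n n R} (hA : A.PosSemidef) (h : IsMoorePenroseInverse A X) :
    X.PosSemidef := by
  have hXAX : Xᴴ * A * X = X := by
    rw [← star_eq_conjTranspose, (h.isSelfAdjoint hA.isHermitian.isSelfAdjoint).star_eq,
      h.mul_self_mul]
  exact hXAX ▸ hA.conjTranspose_mul_mul_same X

end Matrix

open Matrix

theorem loewner_inverse_bound_general (n : ℕ)
    (M Mplus P : Matrix (Fin (n + 1)) (Fin (n + 1)) ℝ)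
    (hM : M.PosSemidef)
    -- Mplus is the Moore–Penrose pseudoinverse of M
    (h1 : M * Mplus * M = M) (h2 : Mplus * M * Mplus = Mplus)
    (h3 : (M * Mplus)ᵀ = M * Mplus) (h4 : (Mplus * M)ᵀ = Mplus * M)
    -- P is the orthogonal projection onto the column space of M
    (hPsymm : P.IsSymm) (hPidem : P * P = P)
    (hPrange : LinearMap.range P.mulVecLin = LinearMap.range M.mulVecLin)
    (ξ lam : ℝ) (hξ : 0 < ξ) (hlam : 0 < lam) :
    (ξ⁻¹ • Mplus + lam⁻¹ • ((1 : Matrix (Fin (n + 1)) (Fin (n + 1)) ℝ) - P)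
      - (ξ • M + lam • (1 : Matrix (Fin (n + 1)) (Fin (n + 1)) ℝ))⁻¹).PosSemidef := by
  have hstar (N : Matrix (Fin (n + 1)) (Fin (n + 1)) ℝ) : star N = Nᵀ :=
    conjTranspose_eq_transpose_of_trivial N
  have hX : IsMoorePenroseInverse M Mplus := ⟨h1, h2, (hstar _).trans h3, (hstar _).trans h4⟩
  have hP : P = M * Mplus := IsStarProjection.eq_of_range_mulVecLin_eq
    ⟨hPidem, (hstar P).trans hPsymm⟩ hX.isStarProjection_self_mul
    (by rw [hPrange, range_mulVecLin_mul_eq_of_mul_mul_eq h1])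
  have hA : (ξ • M + lam • (1 : Matrix (Fin (n + 1)) (Fin (n + 1)) ℝ)).PosDef :=
    PosDef.posSemidef_add (hM.smul hξ.le) (PosDef.one.smul hlam)
  rw [hA.isHermitian.posSemidef_sub_inv_iff hA.isUnit, hP,
    smul_add_smul_one_mul_mul_sub_eq h1 (hX.commute hM.isHermitian.isSelfAdjoint) hξ.ne' hlam.ne']
  exact (hX.isStarProjection_self_mul.posSemidef.smul hlam.le).add
    ((hX.posSemidef hM).smul (by positivity))

theorem loewner_inverse_bound (n : ℕ)
    (M Mplus P : Matrix (Fin (n + 1)) (Fin (n + 1)) ℝ)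
    (hM : M.PosSemidef) (hMsymm : M.IsSymm)
    -- Mplus is the Moore–Penrose pseudoinverse of M
    (h1 : M * Mplus * M = M) (h2 : Mplus * M * Mplus = Mplus)
    (h3 : (M * Mplus)ᵀ = M * Mplus) (h4 : (Mplus * M)ᵀ = Mplus * M)
    -- P is the orthogonal projection onto the column space of M
    (hPsymm : P.IsSymm) (hPidem : P * P = P)
    (hPrange : LinearMap.range P.mulVecLin = LinearMap.range M.mulVecLin)
    (ξ lam : ℝ) (hξ : 0 < ξ) (hlam : 0 < lam) :
    (ξ⁻¹ • Mplus + lam⁻¹ • ((1 : Matrix (Fin (n + 1)) (Fin (n + 1)) ℝ) - P)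
      - (ξ • M + lam • (1 : Matrix (Fin (n + 1)) (Fin (n + 1)) ℝ))⁻¹).PosSemidef :=
  loewner_inverse_bound_general n M Mplus P hM h1 h2 h3 h4 hPsymm hPidem hPrange ξ lam hξ hlam
end
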